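/- [Convergence of the IsoMuSh algorithm] Let (U_t)_{t≥0} be a sequence in 𝒫 and (Q_t)_{t≥0} a sequence in 𝕆 such that for every t ≥ 0: (i) ⟨ΦQ_tQ_tᵀΦᵀU_t, V⟩ ≤ ⟨ΦQ_tQ_tᵀΦᵀU_t, U_{t+1}⟩ for all V ∈ 𝒫, and (ii) ⟨ΦᵀU_{t+1}U_{t+1}ᵀΦQ_t, Y⟩ ≤ ⟨ΦᵀU_{t+1}U_{t+1}ᵀΦQ_t, Q_{t+1}⟩ for all Y ∈ 𝕆. Then the sequence of objective values (f(U_t, Q_t))_{t≥0} is monotonically nondecreasing and converges to a finite limit. -/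

import Mathlib

open Matrix BigOperators Filter

noncomputable section

/-- Frobenius inner product of two real matrices of the same size. -/
def frob {α β : Type*} [Fintype α] [Fintype β] (A B : Matrix α β ℝ) : ℝ :=
  ∑ u, ∑ v, A u v * B u v

/-- The set 𝒫: blockwise partial permutation matrices. Rows indexed by pairs (i,r),
1 ≤ i ≤ k, 1 ≤ r ≤ m i; columns by Fin d. Entries in {0,1}, exactly one 1 per row,
each block column sum at most 1. -/
def isP {k : ℕ} (d : ℕ) (m : Fin k → ℕ)
    (U : Matrix (Σ i : Fin k, Fin (m i)) (Fin d) ℝ) : Prop :=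
  (∀ u v, U u v = 0 ∨ U u v = 1) ∧
  (∀ u, ∃! v, U u v = 1) ∧
  (∀ (i : Fin k) (c : Fin d), ∑ r : Fin (m i), U ⟨i, r⟩ c ≤ 1)

/-- The set 𝕆: block-orthogonal matrices; each b×b block is orthogonal. -/
def isO (k b : ℕ) (Q : Matrix (Fin k × Fin b) (Fin b) ℝ) : Prop :=
  ∀ i : Fin k,
    (Matrix.of fun s t => Q (i, s) t) * (Matrix.of fun s t => Q (i, s) t)ᵀ =
      (1 : Matrix (Fin b) (Fin b) ℝ)

/-- Φ is block-diagonal: entries with mismatched block indices vanish. -/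
def isBlockDiag {k : ℕ} (m : Fin k → ℕ) (b : ℕ)
    (Φ : Matrix (Σ i : Fin k, Fin (m i)) (Fin k × Fin b) ℝ) : Prop :=
  ∀ (i : Fin k) (r : Fin (m i)) (j : Fin k) (s : Fin b), i ≠ j → Φ ⟨i, r⟩ (j, s) = 0

/-- The objective f(U,Q) = ⟨UᵀΦQ, UᵀΦQ⟩. -/
def obj {k b d : ℕ} (m : Fin k → ℕ)
    (Φ : Matrix (Σ i : Fin k, Fin (m i)) (Fin k × Fin b) ℝ)
    (U : Matrix (Σ i : Fin k, Fin (m i)) (Fin d) ℝ)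
    (Q : Matrix (Fin k × Fin b) (Fin b) ℝ) : ℝ :=
  frob (Uᵀ * Φ * Q) (Uᵀ * Φ * Q)

/-!
Each half-step of the iteration maximises the linearisation of `f` in one variable:
`⟨ΦQQᵀΦᵀU, V⟩ = ⟨UᵀΦQ, VᵀΦQ⟩` and `⟨ΦᵀU Uᵀ ΦQ, Y⟩ = ⟨UᵀΦQ, UᵀΦY⟩`. If `A = UᵀΦQ` and the new
iterate `B` satisfies `⟨A, A⟩ ≤ ⟨A, B⟩`, Cauchy–Schwarz gives `‖A‖² ≤ ‖A‖‖B‖`, hence `‖A‖ ≤ ‖B‖`: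
the objective never decreases. All entries of `U ∈ 𝒫` and `Q ∈ 𝕆` lie in `[-1, 1]`, so the objective
is bounded, and a bounded monotone real sequence converges.
-/

section Frobenius

variable {α β : Type*} [Fintype α] [Fintype β]

lemma frob_eq_trace [DecidableEq β] (A B : Matrix α β ℝ) : frob A B = (Aᵀ * B).trace := by
  simp only [frob, Matrix.trace, Matrix.diag, Matrix.mul_apply, Matrix.transpose_apply]
  rw [Finset.sum_comm]

lemma frob_self_nonneg (A : Matrix α β ℝ) : 0 ≤ frob A A :=
  Finset.sum_nonneg fun _ _ => Finset.sum_nonneg fun _ _ => mul_self_nonneg _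

lemma frob_sq_le_frob_self_mul_frob_self (A B : Matrix α β ℝ) :
    frob A B ^ 2 ≤ frob A A * frob B B := by
  have h (C D : Matrix α β ℝ) : frob C D = ∑ p : α × β, C p.1 p.2 * D p.1 p.2 :=
    (Fintype.sum_prod_type fun p : α × β => C p.1 p.2 * D p.1 p.2).symm
  simpa only [h, sq] using
    Finset.sum_mul_sq_le_sq_mul_sq Finset.univ (fun p : α × β => A p.1 p.2) (fun p => B p.1 p.2)

lemma frob_self_le_frob_self_of_le {A B : Matrix α β ℝ} (h : frob A A ≤ frob A B) :
    frob A A ≤ frob B B := by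
  nlinarith [frob_sq_le_frob_self_mul_frob_self A B, frob_self_nonneg A, frob_self_nonneg B]

lemma frob_self_le_of_abs_le {A : Matrix α β ℝ} {M : ℝ} (hA : ∀ u v, |A u v| ≤ M) :
    frob A A ≤ Fintype.card α * Fintype.card β * M ^ 2 := by
  have hentry (u : α) (v : β) : A u v * A u v ≤ M ^ 2 := by
    rw [← sq, ← sq_abs]
    exact pow_le_pow_left₀ (abs_nonneg _) (hA u v) 2
  calc frob A A ≤ ∑ _u : α, ∑ _v : β, M ^ 2 :=
        Finset.sum_le_sum fun u _ => Finset.sum_le_sum fun v _ => hentry u v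
    _ = _ := by simp only [Finset.sum_const, Finset.card_univ, nsmul_eq_mul]; ring

end Frobenius

section Linearisation

variable {ι κ μ ν : Type*} [Fintype ι] [Fintype κ] [Fintype μ] [Fintype ν]

lemma frob_gram_mul_left (Φ : Matrix ι κ ℝ) (U V : Matrix ι μ ℝ) (Q : Matrix κ ν ℝ) :
    frob (Φ * Q * Qᵀ * Φᵀ * U) V = frob (Uᵀ * Φ * Q) (Vᵀ * Φ * Q) := by
  classical
  rw [frob_eq_trace, frob_eq_trace, ← Matrix.trace_transpose,
    Matrix.trace_mul_comm (Uᵀ * Φ * Q)ᵀ]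
  simp only [Matrix.transpose_mul, Matrix.transpose_transpose, Matrix.mul_assoc]

lemma frob_gram_mul_right (Φ : Matrix ι κ ℝ) (U : Matrix ι μ ℝ) (Q Y : Matrix κ ν ℝ) :
    frob (Φᵀ * U * Uᵀ * Φ * Q) Y = frob (Uᵀ * Φ * Q) (Uᵀ * Φ * Y) := by
  classical
  rw [frob_eq_trace, frob_eq_trace]
  simp only [Matrix.transpose_mul, Matrix.transpose_transpose, Matrix.mul_assoc]

lemma frob_self_le_of_alternating_step (Φ : Matrix ι κ ℝ) {U U' : Matrix ι μ ℝ}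
    {Q Q' : Matrix κ ν ℝ}
    (hU : frob (Φ * Q * Qᵀ * Φᵀ * U) U ≤ frob (Φ * Q * Qᵀ * Φᵀ * U) U')
    (hQ : frob (Φᵀ * U' * U'ᵀ * Φ * Q) Q ≤ frob (Φᵀ * U' * U'ᵀ * Φ * Q) Q') :
    frob (Uᵀ * Φ * Q) (Uᵀ * Φ * Q) ≤ frob (U'ᵀ * Φ * Q') (U'ᵀ * Φ * Q') := by
  rw [frob_gram_mul_left, frob_gram_mul_left] at hU
  rw [frob_gram_mul_right, frob_gram_mul_right] at hQ
  exact (frob_self_le_frob_self_of_le hU).trans (frob_self_le_frob_self_of_le hQ)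

end Linearisation

lemma abs_transpose_mul_mul_apply_le {ι κ μ ν : Type*} [Fintype ι] [Fintype κ]
    {Φ : Matrix ι κ ℝ} {U : Matrix ι μ ℝ} {Q : Matrix κ ν ℝ}
    (hU : ∀ u c, |U u c| ≤ 1) (hQ : ∀ p t, |Q p t| ≤ 1) (c : μ) (t : ν) :
    |(Uᵀ * Φ * Q) c t| ≤ ∑ u, ∑ p, |Φ u p| := by
  have hterm (u : ι) (p : κ) : |U u c * Φ u p * Q p t| ≤ |Φ u p| := by
    rw [abs_mul, abs_mul]
    calc |U u c| * |Φ u p| * |Q p t| ≤ 1 * |Φ u p| * 1 := by gcongr <;> simp only [hU, hQ]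
      _ = |Φ u p| := by ring
  have hexpand : (Uᵀ * Φ * Q) c t = ∑ u, ∑ p, U u c * Φ u p * Q p t := by
    simp only [Matrix.mul_apply, Matrix.transpose_apply, Finset.sum_mul]
    exact Finset.sum_comm
  rw [hexpand]
  calc |∑ u, ∑ p, U u c * Φ u p * Q p t| ≤ ∑ u, ∑ p, |U u c * Φ u p * Q p t| :=
        (Finset.abs_sum_le_sum_abs _ _).trans
          (Finset.sum_le_sum fun u _ => Finset.abs_sum_le_sum_abs _ _)
    _ ≤ ∑ u, ∑ p, |Φ u p| :=
        Finset.sum_le_sum fun u _ => Finset.sum_le_sum fun p _ => hterm u p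

lemma isP.abs_apply_le_one {k d : ℕ} {m : Fin k → ℕ}
    {U : Matrix (Σ i : Fin k, Fin (m i)) (Fin d) ℝ}
    (hU : isP d m U) (u : Σ i : Fin k, Fin (m i)) (c : Fin d) : |U u c| ≤ 1 := by
  rcases hU.1 u c with h | h <;> simp [h]

lemma isO.abs_apply_le_one {k b : ℕ} {Q : Matrix (Fin k × Fin b) (Fin b) ℝ} (hQ : isO k b Q)
    (p : Fin k × Fin b) (t : Fin b) : |Q p t| ≤ 1 := by
  obtain ⟨i, s⟩ := p
  have hrow : ∑ j, Q (i, s) j * Q (i, s) j = 1 := by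
    simpa only [Matrix.mul_apply, Matrix.transpose_apply, Matrix.of_apply,
      Matrix.one_apply_eq] using congrFun (congrFun (hQ i) s) s
  refine abs_le_one_iff_mul_self_le_one.mpr (hrow ▸ ?_)
  exact Finset.single_le_sum (f := fun j => Q (i, s) j * Q (i, s) j)
    (fun j _ => mul_self_nonneg _) (Finset.mem_univ t)

lemma obj_le {k b d : ℕ} {m : Fin k → ℕ}
    (Φ : Matrix (Σ i : Fin k, Fin (m i)) (Fin k × Fin b) ℝ)
    {U : Matrix (Σ i : Fin k, Fin (m i)) (Fin d) ℝ} {Q : Matrix (Fin k × Fin b) (Fin b) ℝ}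
    (hU : isP d m U) (hQ : isO k b Q) :
    obj m Φ U Q ≤ d * b * (∑ u, ∑ p, |Φ u p|) ^ 2 := by
  simpa only [obj, Fintype.card_fin] using frob_self_le_of_abs_le
    (abs_transpose_mul_mul_apply_le hU.abs_apply_le_one hQ.abs_apply_le_one)

theorem isomush_convergence_general (k b d : ℕ)
    (m : Fin k → ℕ)
    (Φ : Matrix (Σ i : Fin k, Fin (m i)) (Fin k × Fin b) ℝ)
    (U : ℕ → Matrix (Σ i : Fin k, Fin (m i)) (Fin d) ℝ)
    (Q : ℕ → Matrix (Fin k × Fin b) (Fin b) ℝ)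
    (hU : ∀ t, isP d m (U t)) (hQ : ∀ t, isO k b (Q t))
    (hUstep : ∀ t, ∀ V, isP d m V →
      frob (Φ * Q t * (Q t)ᵀ * Φᵀ * U t) V ≤
        frob (Φ * Q t * (Q t)ᵀ * Φᵀ * U t) (U (t + 1)))
    (hQstep : ∀ t, ∀ Y, isO k b Y →
      frob (Φᵀ * U (t + 1) * (U (t + 1))ᵀ * Φ * Q t) Y ≤
        frob (Φᵀ * U (t + 1) * (U (t + 1))ᵀ * Φ * Q t) (Q (t + 1))) :
    Monotone (fun t => obj m Φ (U t) (Q t)) ∧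
      ∃ L : ℝ, Tendsto (fun t => obj m Φ (U t) (Q t)) atTop (nhds L) := by
  have hmono : Monotone (fun t => obj m Φ (U t) (Q t)) :=
    monotone_nat_of_le_succ fun t =>
      frob_self_le_of_alternating_step Φ (hUstep t (U t) (hU t)) (hQstep t (Q t) (hQ t))
  have hbdd : BddAbove (Set.range fun t => obj m Φ (U t) (Q t)) := by
    refine ⟨d * b * (∑ u, ∑ p, |Φ u p|) ^ 2, ?_⟩
    rintro _ ⟨t, rfl⟩
    exact obj_le Φ (hU t) (hQ t)
  exact ⟨hmono, _, tendsto_atTop_ciSup hmono hbdd⟩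

theorem isomush_convergence (k b d : ℕ) (hk : 0 < k) (hb : 0 < b) (hd : 0 < d)
    (m : Fin k → ℕ) (hm : ∀ i, 0 < m i)
    (Φ : Matrix (Σ i : Fin k, Fin (m i)) (Fin k × Fin b) ℝ) (hΦ : isBlockDiag m b Φ)
    (U : ℕ → Matrix (Σ i : Fin k, Fin (m i)) (Fin d) ℝ)
    (Q : ℕ → Matrix (Fin k × Fin b) (Fin b) ℝ)
    (hU : ∀ t, isP d m (U t)) (hQ : ∀ t, isO k b (Q t))
    (hUstep : ∀ t, ∀ V, isP d m V →
      frob (Φ * Q t * (Q t)ᵀ * Φᵀ * U t) V ≤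
        frob (Φ * Q t * (Q t)ᵀ * Φᵀ * U t) (U (t + 1)))
    (hQstep : ∀ t, ∀ Y, isO k b Y →
      frob (Φᵀ * U (t + 1) * (U (t + 1))ᵀ * Φ * Q t) Y ≤
        frob (Φᵀ * U (t + 1) * (U (t + 1))ᵀ * Φ * Q t) (Q (t + 1))) :
    Monotone (fun t => obj m Φ (U t) (Q t)) ∧
      ∃ L : ℝ, Tendsto (fun t => obj m Φ (U t) (Q t)) atTop (nhds L) :=
  isomush_convergence_general k b d m Φ U Q hU hQ hUstep hQstep
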